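/- arXiv:1002.3881 — 2 statements merged into one kernel-verified Lean document; each statement's English description precedes it below -/
import Mathlib

section
/- There exists δ > 0 such that for any p ∈ (0,1) and any rectangle R ⊆ Z² with dimensions (a,b), a ≤ b and ap ≤ δ, the probability (under independent site percolation with density p) that R is internally spanned under 2-neighbour bootstrap percolation is at most 3^{a+b}·exp(-(a+b)·g(aq)), where q = -log(1-p) and g(z) = -log(β(1-e^{-z})), β(u) = (u + sqrt(u(4-3u)))/2. -/
/-!
Perimeter argument: adding a site with at least two occupied neighbours never increases the
perimeter of a finite set. Rectangles are closed under the dynamics, so a set `A` spanning an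
`a × b` rectangle `R` reaches `R` by such steps, whence `2 (a + b) = per R ≤ per A ≤ 4 |A|`.
A union bound over the `m = ⌈(a + b) / 2⌉`-subsets of `R` then bounds the probability by
`C(ab, m) p ^ m ≤ (2 e a p) ^ m`. With `u = 1 - (1 - p) ^ a = 1 - e ^ (-a q)` one has
`e ^ (-g (a q)) = β u` and `β u ^ 2 ≈ u ≈ a p`, so for `a p ≤ 1/100` this is at most
`(3 β u) ^ (2 m) ≤ (3 β u) ^ (a + b)`.
-/

open scoped Classical

def nbr (v w : ℤ × ℤ) : Prop := |w.1 - v.1| + |w.2 - v.2| = 1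

def bootClosure (A : Set (ℤ × ℤ)) : Set (ℤ × ℤ) :=
  ⋂₀ {B | A ⊆ B ∧ ∀ v : ℤ × ℤ, 2 ≤ ({w | nbr v w} ∩ B).ncard → v ∈ B}

def rectZ (x0 y0 x1 y1 : ℤ) : Set (ℤ × ℤ) :=
  {v | x0 ≤ v.1 ∧ v.1 ≤ x1 ∧ y0 ≤ v.2 ∧ v.2 ≤ y1}

/-- The rectangle `[(x0,y0),(x1,y1)]` as a finite set. -/
noncomputable def rectF (x0 y0 x1 y1 : ℤ) : Finset (ℤ × ℤ) := Finset.Icc x0 x1 ×ˢ Finset.Icc y0 y1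

/-- The probability, when each site of `R` is included independently with
probability `p`, that the random subset lies in the event `E`. -/
noncomputable def probOn (p : ℝ) (R : Finset (ℤ × ℤ)) (E : Finset (ℤ × ℤ) → Prop) : ℝ :=
  ∑ A ∈ R.powerset, p ^ A.card * (1 - p) ^ (R.card - A.card) * (if E A then 1 else 0)

noncomputable def beta (u : ℝ) : ℝ := (u + Real.sqrt (u * (4 - 3 * u))) / 2

noncomputable def gfun (z : ℝ) : ℝ := -Real.log (beta (1 - Real.exp (-z)))

open Finset

def unitVecs : Finset (ℤ × ℤ) := {(1, 0), (-1, 0), (0, 1), (0, -1)}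

lemma card_unitVecs : #unitVecs = 4 := by decide

lemma zero_notMem_unitVecs : (0 : ℤ × ℤ) ∉ unitVecs := by decide

lemma neg_mem_unitVecs {d : ℤ × ℤ} (hd : d ∈ unitVecs) : -d ∈ unitVecs := by
  simp only [unitVecs, mem_insert, mem_singleton] at hd
  rcases hd with rfl | rfl | rfl | rfl <;> decide

lemma nbr_iff_sub_mem_unitVecs {v w : ℤ × ℤ} : nbr v w ↔ w - v ∈ unitVecs := by
  simp only [nbr, unitVecs, mem_insert, mem_singleton, Prod.ext_iff, Prod.fst_sub, Prod.snd_sub]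
  rw [Int.abs_eq_natAbs, Int.abs_eq_natAbs]
  omega

def nbrCount (S : Finset (ℤ × ℤ)) (v : ℤ × ℤ) : ℕ := #{d ∈ unitVecs | v + d ∈ S}

-- the number of lattice edges between `S` and its complement
def perimeter (S : Finset (ℤ × ℤ)) : ℕ := ∑ d ∈ unitVecs, #{w ∈ S | w + d ∉ S}

lemma nbrCount_mono {S T : Finset (ℤ × ℤ)} (h : S ⊆ T) (v : ℤ × ℤ) :
    nbrCount S v ≤ nbrCount T v :=
  card_le_card (monotone_filter_right _ fun _ _ hd => h hd)

lemma card_filter_add_insert {S : Finset (ℤ × ℤ)} {v d : ℤ × ℤ} (hv : v ∉ S) (hd : d ≠ 0) :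
    #{w ∈ insert v S | w + d ∉ insert v S} + (if v - d ∈ S then 1 else 0) =
      #{w ∈ S | w + d ∉ S} + (if v + d ∈ S then 0 else 1) := by
  set F := {w ∈ S | w + d ∉ S}
  have herase : {w ∈ S | w + d ∉ insert v S} = F.erase (v - d) := by
    ext w
    simp only [F, mem_filter, mem_insert, mem_erase, ← eq_sub_iff_add_eq]
    tauto
  have hmem : v - d ∈ F ↔ v - d ∈ S := by simp [F, hv]
  have hF : #(F.erase (v - d)) + (if v - d ∈ S then 1 else 0) = #F := by
    split_ifs with h
    · exact card_erase_add_one (hmem.2 h)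
    · rw [erase_eq_of_notMem (mt hmem.1 h), add_zero]
  have hvF : v ∉ F.erase (v - d) := fun h => hv (mem_filter.1 (mem_of_mem_erase h)).1
  have hvd : v + d ≠ v := by simpa using hd
  rw [filter_insert, herase]
  simp only [mem_insert, hvd, false_or]
  by_cases h1 : v + d ∈ S <;> by_cases h2 : v - d ∈ S <;>
    simp only [h1, h2, if_true, if_false, not_true, not_false_eq_true,
      card_insert_of_notMem hvF] at hF ⊢ <;> omega

lemma perimeter_insert {S : Finset (ℤ × ℤ)} {v : ℤ × ℤ} (hv : v ∉ S) :
    perimeter (insert v S) + 2 * nbrCount S v = perimeter S + 4 := by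
  have hsub : ∑ d ∈ unitVecs, (if v - d ∈ S then 1 else 0) = nbrCount S v := by
    rw [nbrCount, card_filter]
    refine sum_equiv (Equiv.neg _) (fun d => ⟨neg_mem_unitVecs, fun h => ?_⟩) fun d _ => ?_
    · simpa using neg_mem_unitVecs h
    · simp [sub_eq_add_neg]
  have hadd : ∑ d ∈ unitVecs, (if v + d ∈ S then 0 else 1) + nbrCount S v = 4 := by
    rw [nbrCount, card_filter, ← sum_add_distrib, ← card_unitVecs, card_eq_sum_ones]
    exact sum_congr rfl fun d _ => by split_ifs <;> rfl
  have h := sum_congr rfl fun d hd =>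
    card_filter_add_insert (S := S) hv (ne_of_mem_of_not_mem hd zero_notMem_unitVecs)
  rw [sum_add_distrib, sum_add_distrib, hsub] at h
  unfold perimeter
  omega

lemma perimeter_le_four_mul_card (S : Finset (ℤ × ℤ)) : perimeter S ≤ 4 * #S := by
  rw [← card_unitVecs, ← smul_eq_mul]
  exact sum_le_card_nsmul _ _ _ fun d _ => card_filter_le _ _

def IsBootClosed (R : Finset (ℤ × ℤ)) : Prop := ∀ v, 2 ≤ nbrCount R v → v ∈ R

def BootStep (S T : Finset (ℤ × ℤ)) : Prop := ∃ v ∉ S, 2 ≤ nbrCount S v ∧ T = insert v S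

def BootReach (A S : Finset (ℤ × ℤ)) : Prop := Relation.ReflTransGen BootStep A S

namespace BootReach

variable {A S T : Finset (ℤ × ℤ)}

lemma perimeter_le (h : BootReach A S) : perimeter S ≤ perimeter A := by
  induction h with
  | refl => exact le_rfl
  | tail _ hstep ih =>
    obtain ⟨v, hv, hdeg, rfl⟩ := hstep
    have := perimeter_insert hv
    omega

lemma subset (h : BootReach A S) : A ⊆ S := by
  induction h with
  | refl => exact Subset.rfl
  | tail _ hstep ih =>
    obtain ⟨v, -, -, rfl⟩ := hstep
    exact ih.trans (subset_insert _ _)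

lemma union (hS : BootReach A S) (hT : BootReach A T) : BootReach A (S ∪ T) := by
  induction hT with
  | refl => rwa [union_eq_left.2 hS.subset]
  | @tail T' _ _ hstep ih =>
    obtain ⟨v, -, hdeg, rfl⟩ := hstep
    rw [union_insert]
    by_cases hv : v ∈ S ∪ T'
    · rwa [insert_eq_self.2 hv]
    · exact ih.tail ⟨v, hv, hdeg.trans (nbrCount_mono subset_union_right v), rfl⟩

lemma subset_of_isBootClosed {R : Finset (ℤ × ℤ)} (hR : IsBootClosed R) (hAR : A ⊆ R)
    (h : BootReach A S) : S ⊆ R := by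
  induction h with
  | refl => exact hAR
  | tail _ hstep ih =>
    obtain ⟨v, -, hdeg, rfl⟩ := hstep
    exact insert_subset (hR v (hdeg.trans (nbrCount_mono ih v))) ih

end BootReach

lemma finite_setOf_nbr (v : ℤ × ℤ) : {w | nbr v w}.Finite :=
  (unitVecs.image (v + ·)).finite_toSet.subset fun w hw =>
    mem_image.2 ⟨w - v, nbr_iff_sub_mem_unitVecs.1 hw, add_sub_cancel v w⟩

-- the union of all sets reachable from `A` is closed under the dynamics and contains `A`
lemma bootClosure_subset_setOf_reach (A : Finset (ℤ × ℤ)) :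
    bootClosure ↑A ⊆ {v | ∃ S, BootReach A S ∧ v ∈ S} := by
  refine Set.sInter_subset_of_mem ⟨fun v hv => ⟨A, .refl, hv⟩, fun v hv => ?_⟩
  obtain ⟨w₁, ⟨hn₁, S₁, hS₁, hw₁⟩, w₂, ⟨hn₂, S₂, hS₂, hw₂⟩, hne⟩ :=
    (Set.one_lt_ncard ((finite_setOf_nbr v).inter_of_left _)).1 hv
  have hdeg : 2 ≤ nbrCount (S₁ ∪ S₂) v := by
    refine one_lt_card.2 ⟨w₁ - v, ?_, w₂ - v, ?_, sub_left_injective.ne hne⟩ <;>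
      simp only [mem_filter, add_sub_cancel, mem_union]
    exacts [⟨nbr_iff_sub_mem_unitVecs.1 hn₁, .inl hw₁⟩,
      ⟨nbr_iff_sub_mem_unitVecs.1 hn₂, .inr hw₂⟩]
  by_cases hv' : v ∈ S₁ ∪ S₂
  · exact ⟨_, hS₁.union hS₂, hv'⟩
  · exact ⟨_, (hS₁.union hS₂).tail ⟨v, hv', hdeg, rfl⟩, mem_insert_self _ _⟩

lemma exists_bootReach_superset {A : Finset (ℤ × ℤ)} (F : Finset (ℤ × ℤ))
    (h : ↑F ⊆ {v | ∃ S, BootReach A S ∧ v ∈ S}) : ∃ S, BootReach A S ∧ F ⊆ S := by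
  induction F using Finset.induction_on with
  | empty => exact ⟨A, .refl, empty_subset _⟩
  | insert v F _ ih =>
    obtain ⟨S, hS, hFS⟩ := ih ((coe_subset.2 (subset_insert v F)).trans h)
    obtain ⟨T, hT, hvT⟩ := h (mem_insert_self v F)
    exact ⟨S ∪ T, hS.union hT,
      insert_subset (mem_union_right _ hvT) (hFS.trans subset_union_left)⟩

lemma perimeter_le_of_subset_bootClosure {A R : Finset (ℤ × ℤ)}
    (hR : IsBootClosed R) (hAR : A ⊆ R) (hspan : ↑R ⊆ bootClosure ↑A) :
    perimeter R ≤ perimeter A := by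
  obtain ⟨S, hS, hRS⟩ :=
    exists_bootReach_superset R (hspan.trans (bootClosure_subset_setOf_reach A))
  rw [(hS.subset_of_isBootClosed hR hAR).antisymm hRS] at hS
  exact hS.perimeter_le

lemma mem_rectF {x0 y0 x1 y1 : ℤ} {v : ℤ × ℤ} :
    v ∈ rectF x0 y0 x1 y1 ↔ x0 ≤ v.1 ∧ v.1 ≤ x1 ∧ y0 ≤ v.2 ∧ v.2 ≤ y1 := by
  simp [rectF, and_assoc]

lemma coe_rectF (x0 y0 x1 y1 : ℤ) : (rectF x0 y0 x1 y1 : Set (ℤ × ℤ)) = rectZ x0 y0 x1 y1 := by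
  ext v
  simp [mem_rectF, rectZ]

lemma card_rectF (x0 y0 : ℤ) (a b : ℕ) : #(rectF x0 y0 (x0 + a - 1) (y0 + b - 1)) = a * b := by
  simp [rectF]

lemma isBootClosed_rectF (x0 y0 x1 y1 : ℤ) : IsBootClosed (rectF x0 y0 x1 y1) := by
  intro v h
  obtain ⟨d₁, hd₁, d₂, hd₂, hne⟩ := one_lt_card.1 h
  simp only [mem_filter, unitVecs, mem_insert, mem_singleton, mem_rectF] at hd₁ hd₂
  rw [mem_rectF]
  obtain ⟨hd₁ | hd₁ | hd₁ | hd₁, h₁⟩ := hd₁ <;> obtain ⟨hd₂ | hd₂ | hd₂ | hd₂, h₂⟩ := hd₂ <;>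
    subst hd₁ hd₂ <;> simp at h₁ h₂ hne ⊢ <;> omega

lemma perimeter_rectF (x0 y0 : ℤ) {a b : ℕ} (ha : 0 < a) (hb : 0 < b) :
    perimeter (rectF x0 y0 (x0 + a - 1) (y0 + b - 1)) = 2 * (a + b) := by
  set R := rectF x0 y0 (x0 + a - 1) (y0 + b - 1)
  have hright : {w ∈ R | w + (1, 0) ∉ R} = {x0 + a - 1} ×ˢ Icc y0 (y0 + b - 1) := by
    ext ⟨x, y⟩; simp [R, rectF]; omega
  have hleft : {w ∈ R | w + (-1, 0) ∉ R} = {x0} ×ˢ Icc y0 (y0 + b - 1) := by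
    ext ⟨x, y⟩; simp [R, rectF]; omega
  have htop : {w ∈ R | w + (0, 1) ∉ R} = Icc x0 (x0 + a - 1) ×ˢ {y0 + b - 1} := by
    ext ⟨x, y⟩; simp [R, rectF]; omega
  have hbot : {w ∈ R | w + (0, -1) ∉ R} = Icc x0 (x0 + a - 1) ×ˢ {y0} := by
    ext ⟨x, y⟩; simp [R, rectF]; omega
  simp only [perimeter, unitVecs]
  rw [sum_insert (by decide), sum_insert (by decide), sum_insert (by decide), sum_singleton,
    hright, hleft, htop, hbot]
  simp
  ring

lemma add_le_two_mul_card_of_subset_bootClosure {x0 y0 : ℤ} {a b : ℕ} (ha : 0 < a) (hb : 0 < b)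
    {A : Finset (ℤ × ℤ)} (hA : A ⊆ rectF x0 y0 (x0 + a - 1) (y0 + b - 1))
    (hspan : rectZ x0 y0 (x0 + a - 1) (y0 + b - 1) ⊆ bootClosure ↑A) : a + b ≤ 2 * #A := by
  have h := perimeter_le_of_subset_bootClosure (isBootClosed_rectF _ _ _ _) hA
    (by rwa [coe_rectF])
  rw [perimeter_rectF x0 y0 ha hb] at h
  have := perimeter_le_four_mul_card A
  omega

lemma probOn_superset (p : ℝ) {R M : Finset (ℤ × ℤ)} (hM : M ⊆ R) :
    probOn p R (M ⊆ ·) = p ^ #M := by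
  have hIcc : {A ∈ R.powerset | M ⊆ A} = Icc M R := by
    ext A; simp [and_comm]
  have hdisj : ∀ B ∈ (R \ M).powerset, Disjoint M B := fun B hB =>
    disjoint_of_subset_right (mem_powerset.1 hB) disjoint_sdiff
  have hcard : ∀ B ∈ (R \ M).powerset, #(M ∪ B) = #M + #B ∧ #R - #(M ∪ B) = #(R \ M) - #B :=
    fun B hB => by
      rw [card_union_of_disjoint (hdisj B hB), card_sdiff_of_subset hM]
      exact ⟨rfl, by omega⟩
  simp_rw [probOn, mul_ite, mul_one, mul_zero]
  rw [← sum_filter, hIcc, Icc_eq_image_powerset hM, sum_image fun B hB C hC h => ?_]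
  · rw [sum_congr rfl fun B hB => by rw [(hcard B hB).2, (hcard B hB).1, pow_add, mul_assoc],
      ← mul_sum, sum_pow_mul_eq_add_pow, add_sub_cancel, one_pow, mul_one]
  · rw [← union_sdiff_cancel_left (hdisj B hB), h, union_sdiff_cancel_left (hdisj C hC)]

lemma probOn_le_choose_mul_pow {p : ℝ} (hp0 : 0 ≤ p) (hp1 : p ≤ 1) {R : Finset (ℤ × ℤ)}
    {E : Finset (ℤ × ℤ) → Prop} {m : ℕ} (hE : ∀ A ⊆ R, E A → m ≤ #A) :
    probOn p R E ≤ (#R).choose m * p ^ m := by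
  have hcover : ∀ A ∈ R.powerset,
      (if E A then 1 else 0 : ℝ) ≤ ∑ M ∈ R.powersetCard m, if M ⊆ A then 1 else 0 := by
    intro A hA
    split_ifs with hEA
    · obtain ⟨M, hM⟩ := powersetCard_nonempty.2 (hE A (mem_powerset.1 hA) hEA)
      obtain ⟨hMA, hMcard⟩ := mem_powersetCard.1 hM
      have hMR : M ∈ R.powersetCard m :=
        mem_powersetCard.2 ⟨hMA.trans (mem_powerset.1 hA), hMcard⟩
      simpa [hMA] using single_le_sum (f := fun M' => if M' ⊆ A then (1 : ℝ) else 0)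
        (fun _ _ => by split_ifs <;> norm_num) hMR
    · exact sum_nonneg fun _ _ => by split_ifs <;> norm_num
  calc probOn p R E
      ≤ ∑ A ∈ R.powerset, p ^ #A * (1 - p) ^ (#R - #A) *
          ∑ M ∈ R.powersetCard m, if M ⊆ A then 1 else 0 :=
        sum_le_sum fun A hA => mul_le_mul_of_nonneg_left (hcover A hA)
          (mul_nonneg (pow_nonneg hp0 _) (pow_nonneg (sub_nonneg.2 hp1) _))
    _ = ∑ M ∈ R.powersetCard m, probOn p R (M ⊆ ·) := by
        simp_rw [probOn, mul_sum]
        convert sum_comm using 5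
    _ = (#R).choose m * p ^ m := by
        rw [sum_congr rfl fun M hM => by
          rw [probOn_superset p (mem_powersetCard.1 hM).1, (mem_powersetCard.1 hM).2]]
        simp

lemma probOn_spans_rectF_le {p : ℝ} (hp0 : 0 ≤ p) (hp1 : p ≤ 1) {a b : ℕ} (ha : 0 < a) (hb : 0 < b)
    (x0 y0 : ℤ) :
    probOn p (rectF x0 y0 (x0 + a - 1) (y0 + b - 1))
        (fun A => rectZ x0 y0 (x0 + a - 1) (y0 + b - 1) ⊆ bootClosure ↑A) ≤
      ((a * b).choose ((a + b + 1) / 2) : ℝ) * p ^ ((a + b + 1) / 2) := by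
  rw [← card_rectF x0 y0 a b]
  refine probOn_le_choose_mul_pow hp0 hp1 fun A hA hspan => ?_
  have := add_le_two_mul_card_of_subset_bootClosure ha hb hA hspan
  omega

lemma choose_mul_pow_le {a b m : ℕ} {p : ℝ} (hp : 0 ≤ p) (hb : b ≤ 2 * m) :
    ((a * b).choose m : ℝ) * p ^ m ≤ (2 * Real.exp 1 * (a * p)) ^ m := by
  have hb' : (b : ℝ) ≤ 2 * m := by exact_mod_cast hb
  calc ((a * b).choose m : ℝ) * p ^ m ≤ ((a * b : ℕ) : ℝ) ^ m / m.factorial * p ^ m := by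
        gcongr; exact Nat.choose_le_pow_div m (a * b)
    _ = (b * (a * p)) ^ m / m.factorial := by push_cast; ring
    _ ≤ (2 * m * (a * p)) ^ m / m.factorial := by gcongr
    _ = (2 * (a * p)) ^ m * ((m : ℝ) ^ m / m.factorial) := by ring
    _ ≤ (2 * (a * p)) ^ m * Real.exp m := by
        gcongr; exact Real.pow_div_factorial_le_exp _ m.cast_nonneg m
    _ = (2 * Real.exp 1 * (a * p)) ^ m := by rw [← Real.exp_one_pow]; ring

lemma one_sub_one_sub_pow_le {p : ℝ} (hp : p ≤ 2) (a : ℕ) : 1 - (1 - p) ^ a ≤ a * p := by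
  have := one_add_mul_le_pow (a := -p) (by linarith) a
  rw [← sub_eq_add_neg] at this
  linarith

lemma div_one_add_le_one_sub_one_sub_pow {p : ℝ} (hp0 : 0 ≤ p) (hp1 : p ≤ 1) (a : ℕ) :
    a * p / (1 + a * p) ≤ 1 - (1 - p) ^ a := by
  have hexp : (1 - p) ^ a ≤ (1 + a * p)⁻¹ :=
    calc (1 - p) ^ a ≤ Real.exp (-p) ^ a := by
          gcongr
          exact Real.one_sub_le_exp_neg p
      _ = (Real.exp (a * p))⁻¹ := by rw [← Real.exp_nat_mul, ← Real.exp_neg, mul_neg]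
      _ ≤ (1 + a * p)⁻¹ := by
          gcongr
          linarith [Real.add_one_le_exp (a * p)]
  have hpos : 0 < 1 + a * p := by positivity
  have : a * p / (1 + a * p) = 1 - (1 + a * p)⁻¹ := by field_simp; ring
  linarith

lemma exp_neg_mul_neg_log {p : ℝ} (hp : p < 1) (a : ℕ) :
    Real.exp (-(a * -Real.log (1 - p))) = (1 - p) ^ a := by
  rw [mul_neg, neg_neg, Real.exp_nat_mul, Real.exp_log (by linarith)]

lemma beta_pos {u : ℝ} (hu : 0 < u) : 0 < beta u := by
  unfold beta
  positivity

lemma three_pow_mul_exp_neg_gfun {p : ℝ} (hp0 : 0 < p) (hp1 : p < 1) {a : ℕ} (ha : 0 < a) (n : ℕ) :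
    (3 : ℝ) ^ n * Real.exp (-(n : ℝ) * gfun (a * -Real.log (1 - p))) =
      (3 * beta (1 - (1 - p) ^ a)) ^ n := by
  have hu : 0 < 1 - (1 - p) ^ a := sub_pos.2 (pow_lt_one₀ (by linarith) (by linarith) ha.ne')
  rw [neg_mul, ← mul_neg, Real.exp_nat_mul, gfun, neg_neg, exp_neg_mul_neg_log hp1,
    Real.exp_log (beta_pos hu), mul_pow]

lemma three_beta_le_one {u : ℝ} (hu0 : 0 ≤ u) (hu : u ≤ 1 / 12) : 3 * beta u ≤ 1 := by
  have hsqrt : Real.sqrt (u * (4 - 3 * u)) ≤ 2 / 3 - u :=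
    Real.sqrt_le_iff.2 ⟨by linarith, by nlinarith⟩
  unfold beta
  linarith

lemma two_exp_mul_le_sq_three_beta {t u : ℝ} (ht0 : 0 ≤ t) (ht : t ≤ 1 / 100)
    (hu : t / (1 + t) ≤ u) (hut : u ≤ t) : 2 * Real.exp 1 * t ≤ (3 * beta u) ^ 2 := by
  have hu0 : 0 ≤ u := (div_nonneg ht0 (by linarith)).trans hu
  have hroot : 0 ≤ u * (4 - 3 * u) := mul_nonneg hu0 (by linarith)
  have hbeta : Real.sqrt (u * (4 - 3 * u)) / 2 ≤ beta u := by
    unfold beta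
    linarith
  have hsq : u * (4 - 3 * u) / 4 ≤ beta u ^ 2 := by
    calc u * (4 - 3 * u) / 4 = (Real.sqrt (u * (4 - 3 * u)) / 2) ^ 2 := by
          rw [div_pow, Real.sq_sqrt hroot]; ring
      _ ≤ beta u ^ 2 := by gcongr
  have hut' : t ≤ u * (1 + t) := by rwa [div_le_iff₀ (by linarith)] at hu
  -- `(3 β u) ^ 2 ≥ 9 u (4 - 3 u) / 4 ≥ 8 u ≥ 6 t ≥ 2 e t`
  nlinarith [Real.exp_one_lt_d9]

/-- There exists `δ > 0` such that for every `p ∈ (0,1)` and every rectangle with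
dimensions `(a,b)`, `a ≤ b`, `ap ≤ δ`, the probability that the rectangle is
internally spanned is at most `3^{a+b} exp(-(a+b) g(aq))`, where `q = -log(1-p)`. -/
theorem stmt8 :
    ∃ δ : ℝ, 0 < δ ∧ ∀ p : ℝ, 0 < p → p < 1 → ∀ a b : ℕ, 0 < a → a ≤ b →
      (a : ℝ) * p ≤ δ → ∀ x0 y0 : ℤ,
      probOn p (rectF x0 y0 (x0 + a - 1) (y0 + b - 1))
        (fun A => rectZ x0 y0 (x0 + a - 1) (y0 + b - 1) ⊆ bootClosure ↑A)
      ≤ (3 : ℝ) ^ (a + b) *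
          Real.exp (-((a : ℝ) + (b : ℝ)) * gfun ((a : ℝ) * (-Real.log (1 - p)))) := by
  refine ⟨1 / 100, by norm_num, fun p hp0 hp1 a b ha hab hδ x0 y0 => ?_⟩
  have hRHS := three_pow_mul_exp_neg_gfun hp0 hp1 ha (a + b)
  push_cast at hRHS
  rw [hRHS]
  set u := 1 - (1 - p) ^ a
  have hut : u ≤ a * p := one_sub_one_sub_pow_le (by linarith) a
  have hu : a * p / (1 + a * p) ≤ u := div_one_add_le_one_sub_one_sub_pow hp0.le hp1.le a
  have hu0 : 0 < u := lt_of_lt_of_le (by positivity) hu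
  set m := (a + b + 1) / 2
  calc _ ≤ ((a * b).choose m : ℝ) * p ^ m :=
        probOn_spans_rectF_le hp0.le hp1.le ha (ha.trans_le hab) x0 y0
    _ ≤ (2 * Real.exp 1 * (a * p)) ^ m := choose_mul_pow_le hp0.le (by omega)
    _ ≤ ((3 * beta u) ^ 2) ^ m := by
        gcongr
        exact two_exp_mul_le_sq_three_beta (by positivity) hδ hu hut
    _ = (3 * beta u) ^ (2 * m) := (pow_mul _ _ _).symm
    _ ≤ (3 * beta u) ^ (a + b) :=
        pow_le_pow_of_le_one (mul_pos three_pos (beta_pos hu0)).le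
          (three_beta_le_one hu0.le (by linarith)) (by omega)
end

section
/- Let R be a rectangle with dimensions (a,b). The probability, under independent site percolation with density p, that R is crossed from left to right (i.e., R has no two adjacent empty columns and its final column is occupied) is at most e^{-a·g(bq)}, where q = -log(1-p) and g(z) = -log(β(1-e^{-z})), β(u) = (u+sqrt(u(4-3u)))/2. -/
open scoped Classical

/-- Column `i` of the rectangle (with vertical extent `[y0, y0+b-1]`) contains an
occupied site of `A`. -/
def colOcc (A : Finset (ℤ × ℤ)) (y0 : ℤ) (b : ℕ) (i : ℤ) : Prop :=
  ∃ y ∈ Finset.Icc y0 (y0 + (b : ℤ) - 1), (i, y) ∈ A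

/-- The rectangle with columns `x0, …, x0+a-1` is crossed from left to right:
no two adjacent columns are both empty, and the final column is occupied. -/
def Crossed (x0 y0 : ℤ) (a b : ℕ) (A : Finset (ℤ × ℤ)) : Prop :=
  (∀ i : ℤ, x0 ≤ i → i + 1 ≤ x0 + (a : ℤ) - 1 →
    (colOcc A y0 b i ∨ colOcc A y0 b (i + 1))) ∧
  colOcc A y0 b (x0 + (a : ℤ) - 1)

/-!
Columns are occupied independently, each with probability `u = 1 - (1 - p) ^ b = 1 - e^{-bq}`.
Splitting a crossing of `k + 3` columns according to whether its next-to-last column is occupied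
gives `c (k + 3) = u c (k + 2) + u (1 - u) c (k + 1)` for the crossing probabilities `c n`, and
`β = beta u` is the nonnegative root of `β² = u β + u (1 - u)`. As `c 1 = c 2 = u ≤ β` and
`u ≤ β²`, induction gives `c n ≤ β ^ n`, which is `e^{-n g(bq)}` when `β > 0` (when `β = 0`,
`Real.log 0 = 0` makes the bound `1`).
-/

open Finset

section DeterminedBy

variable {α : Type*} [DecidableEq α]

def DeterminedBy (E : Finset α → Prop) (s : Finset α) : Prop :=
  ∀ A, E (A ∩ s) ↔ E A

variable {E F : Finset α → Prop} {s : Finset α}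

lemma DeterminedBy.not (h : DeterminedBy E s) : DeterminedBy (fun A => ¬ E A) s :=
  fun A => not_congr (h A)

lemma DeterminedBy.and (hE : DeterminedBy E s) (hF : DeterminedBy F s) :
    DeterminedBy (fun A => E A ∧ F A) s :=
  fun A => and_congr (hE A) (hF A)

end DeterminedBy

section ProbOn

variable {p : ℝ} {R s t : Finset (ℤ × ℤ)} {E F : Finset (ℤ × ℤ) → Prop}

lemma probOn_congr (h : ∀ A ⊆ R, (E A ↔ F A)) : probOn p R E = probOn p R F :=
  sum_congr rfl fun A hA => by rw [if_congr (h A (mem_powerset.mp hA)) rfl rfl]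

lemma probOn_true : probOn p R (fun _ => True) = 1 := by
  simp [probOn, sum_pow_mul_eq_add_pow]

lemma probOn_not : probOn p R (fun A => ¬ E A) = 1 - probOn p R E := by
  rw [← probOn_true (p := p) (R := R)]
  unfold probOn
  rw [← sum_sub_distrib]
  refine sum_congr rfl fun A _ => ?_
  by_cases hA : E A <;> simp [hA]

lemma probOn_or_of_disjoint (h : ∀ A, ¬ (E A ∧ F A)) :
    probOn p R (fun A => E A ∨ F A) = probOn p R E + probOn p R F := by
  unfold probOn
  rw [← sum_add_distrib]
  refine sum_congr rfl fun A _ => ?_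
  by_cases hE : E A <;> by_cases hF : F A <;> simp [hE, hF]
  exact absurd ⟨hE, hF⟩ (h A)

lemma probOn_eq_empty : probOn p R (· = ∅) = (1 - p) ^ #R := by
  unfold probOn
  rw [sum_eq_single_of_mem ∅ (empty_mem_powerset R) fun A _ hA => by simp [hA]]
  simp

lemma probOn_nonempty : probOn p R Finset.Nonempty = 1 - (1 - p) ^ #R := by
  rw [probOn_congr fun A _ => nonempty_iff_ne_empty, probOn_not, probOn_eq_empty]

lemma probOn_and_of_disjoint (hst : Disjoint s t) (hE : DeterminedBy E s)
    (hF : DeterminedBy F t) :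
    probOn p (s ∪ t) (fun A => E A ∧ F A) = probOn p s E * probOn p t F := by
  unfold probOn
  rw [sum_mul_sum, ← sum_product']
  refine sum_nbij' (fun A => (A ∩ s, A ∩ t)) (fun BD => BD.1 ∪ BD.2) ?_ ?_ ?_ ?_ ?_
  · intro A hA
    simp only [mem_powerset, mem_product]
    exact ⟨inter_subset_right, inter_subset_right⟩
  · rintro ⟨B, D⟩ h
    simp only [mem_powerset, mem_product] at h ⊢
    exact union_subset_union h.1 h.2
  · intro A hA
    simp only [mem_powerset] at hA
    rw [← inter_union_distrib_left, inter_eq_left.mpr hA]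
  · rintro ⟨B, D⟩ h
    simp only [mem_powerset, mem_product] at h ⊢
    have hBt : B ∩ t = ∅ := disjoint_iff_inter_eq_empty.mp (disjoint_of_subset_left h.1 hst)
    have hDs : D ∩ s = ∅ :=
      disjoint_iff_inter_eq_empty.mp (disjoint_of_subset_left h.2 hst.symm)
    rw [union_inter_distrib_right, union_inter_distrib_right, inter_eq_left.mpr h.1,
      inter_eq_left.mpr h.2, hBt, hDs, union_empty, empty_union]
  · intro A hA
    simp only [mem_powerset] at hA
    have hcard : #A = #(A ∩ s) + #(A ∩ t) := by
      rw [← card_union_of_disjoint (hst.mono inter_subset_right inter_subset_right),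
        ← inter_union_distrib_left, inter_eq_left.mpr hA]
    have hs : #(A ∩ s) ≤ #s := card_le_card inter_subset_right
    have ht : #(A ∩ t) ≤ #t := card_le_card inter_subset_right
    have hcompl : #(s ∪ t) - #A = (#s - #(A ∩ s)) + (#t - #(A ∩ t)) := by
      rw [card_union_of_disjoint hst]; omega
    dsimp only
    rw [hcompl, hcard, pow_add, pow_add]
    by_cases hEA : E A <;> by_cases hFA : F A <;> simp [hEA, hFA, hE A, hF A]
    ring

lemma probOn_of_determinedBy (htR : t ⊆ R) (hE : DeterminedBy E t) :
    probOn p R E = probOn p t E := by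
  rw [← sdiff_union_of_subset htR,
    probOn_congr (F := fun A => True ∧ E A) fun A _ => Iff.of_eq (true_and (E A)).symm,
    probOn_and_of_disjoint sdiff_disjoint (fun _ => Iff.rfl) hE, probOn_true, one_mul]

end ProbOn

noncomputable def colF (y0 : ℤ) (b : ℕ) (i : ℤ) : Finset (ℤ × ℤ) :=
  {i} ×ˢ Icc y0 (y0 + b - 1)

noncomputable def rectangle (x0 y0 : ℤ) (a b : ℕ) : Finset (ℤ × ℤ) :=
  rectF x0 y0 (x0 + a - 1) (y0 + b - 1)

section Columns

variable {x0 y0 : ℤ} {a b : ℕ} {i j : ℤ}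

lemma card_colF : #(colF y0 b i) = b := by
  rw [colF, card_product, card_singleton, Int.card_Icc]
  omega

lemma colOcc_iff_nonempty {A : Finset (ℤ × ℤ)} (hA : A ⊆ colF y0 b i) :
    colOcc A y0 b i ↔ A.Nonempty := by
  refine ⟨fun ⟨y, _, hy⟩ => ⟨(i, y), hy⟩, fun ⟨⟨x, y⟩, hxy⟩ => ?_⟩
  obtain ⟨hx, hy⟩ := mem_product.mp (hA hxy)
  obtain rfl : x = i := mem_singleton.mp hx
  exact ⟨y, hy, hxy⟩

lemma determinedBy_colOcc {S : Finset (ℤ × ℤ)} (hS : colF y0 b i ⊆ S) :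
    DeterminedBy (fun A => colOcc A y0 b i) S := fun A => by
  simp only [colOcc, mem_inter]
  exact exists_congr fun y => and_congr_right fun hy =>
    and_iff_left (hS (mem_product.mpr ⟨mem_singleton_self i, hy⟩ : (i, y) ∈ colF y0 b i))

lemma probOn_colOcc (p : ℝ) :
    probOn p (colF y0 b i) (fun A => colOcc A y0 b i) = 1 - (1 - p) ^ b := by
  rw [probOn_congr fun A hA => colOcc_iff_nonempty hA, probOn_nonempty, card_colF]

lemma probOn_not_colOcc (p : ℝ) :
    probOn p (colF y0 b i) (fun A => ¬ colOcc A y0 b i) = (1 - p) ^ b := by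
  rw [probOn_not, probOn_colOcc]
  ring

lemma disjoint_colF (h : i ≠ j) : Disjoint (colF y0 b i) (colF y0 b j) :=
  disjoint_product.mpr (Or.inl (disjoint_singleton.mpr h))

lemma colF_subset_rectangle (h0 : x0 ≤ i) (h1 : i < x0 + a) :
    colF y0 b i ⊆ rectangle x0 y0 a b := by
  refine product_subset_product (fun x hx => ?_) subset_rfl
  rw [mem_singleton.mp hx, mem_Icc]
  omega

lemma rectangle_succ (n : ℕ) :
    rectangle x0 y0 (n + 1) b = rectangle x0 y0 n b ∪ colF y0 b (x0 + n) := by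
  ext ⟨x, y⟩
  simp only [rectangle, rectF, colF, mem_union, mem_product, mem_Icc, mem_singleton]
  omega

lemma disjoint_rectangle_colF (h : x0 + a ≤ i) : Disjoint (rectangle x0 y0 a b) (colF y0 b i) :=
  disjoint_product.mpr (Or.inl (disjoint_left.mpr fun x hx hx' => by
    rw [mem_Icc] at hx
    rw [mem_singleton] at hx'
    omega))

end Columns

section Crossing

variable {x0 y0 : ℤ} {b : ℕ} {A : Finset (ℤ × ℤ)}

lemma determinedBy_crossed {a : ℕ} (ha : 1 ≤ a) :
    DeterminedBy (Crossed x0 y0 a b) (rectangle x0 y0 a b) := fun A => by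
  have hcol : ∀ i, x0 ≤ i → i < x0 + a →
      (colOcc (A ∩ rectangle x0 y0 a b) y0 b i ↔ colOcc A y0 b i) :=
    fun i h0 h1 => determinedBy_colOcc (colF_subset_rectangle h0 h1) A
  unfold Crossed
  exact and_congr (forall_congr' fun i => imp_congr_right fun h0 => imp_congr_right fun h1 =>
    or_congr (hcol _ h0 (by omega)) (hcol _ (by omega) (by omega))) (hcol _ (by omega) (by omega))

lemma crossed_one : Crossed x0 y0 1 b A ↔ colOcc A y0 b x0 := by
  simp only [Crossed, Nat.cast_one, add_sub_cancel_right]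
  exact ⟨And.right, fun h => ⟨fun i h0 h1 => by omega, h⟩⟩

lemma crossed_two : Crossed x0 y0 2 b A ↔ colOcc A y0 b (x0 + 1) := by
  have e : x0 + ((2 : ℕ) : ℤ) - 1 = x0 + 1 := by push_cast; ring
  simp only [Crossed, e]
  refine ⟨And.right, fun h => ⟨fun i h0 h1 => Or.inr ?_, h⟩⟩
  obtain rfl : i = x0 := by omega
  exact h

lemma crossed_add_three (k : ℕ) :
    Crossed x0 y0 (k + 3) b A ↔
      (Crossed x0 y0 (k + 2) b A ∧ colOcc A y0 b (x0 + (k + 2 : ℕ))) ∨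
      (Crossed x0 y0 (k + 1) b A ∧
        ¬ colOcc A y0 b (x0 + (k + 1 : ℕ)) ∧ colOcc A y0 b (x0 + (k + 2 : ℕ))) := by
  unfold Crossed
  push_cast
  have e3 : x0 + ((k : ℤ) + 3) - 1 = x0 + (k + 2) := by ring
  have e2 : x0 + ((k : ℤ) + 2) - 1 = x0 + (k + 1) := by ring
  have e1 : x0 + ((k : ℤ) + 1) - 1 = x0 + k := by ring
  rw [e3, e2, e1]
  constructor
  · rintro ⟨hpairs, hlast⟩
    by_cases hM : colOcc A y0 b (x0 + (k + 1))
    · exact Or.inl ⟨⟨fun i h0 h1 => hpairs i h0 (by omega), hM⟩, hlast⟩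
    · refine Or.inr ⟨⟨fun i h0 h1 => hpairs i h0 (by omega), ?_⟩, hM, hlast⟩
      have := hpairs (x0 + k) (by omega) (by omega)
      rw [add_assoc] at this
      exact this.resolve_right hM
  · rintro (⟨⟨hpairs, hM⟩, hlast⟩ | ⟨⟨hpairs, hK⟩, hM, hlast⟩)
    · refine ⟨fun i h0 h1 => ?_, hlast⟩
      by_cases hi : i + 1 ≤ x0 + (k + 1)
      · exact hpairs i h0 hi
      · obtain rfl : i = x0 + (k + 1) := by omega
        exact Or.inr (by rwa [add_assoc])
    · refine ⟨fun i h0 h1 => ?_, hlast⟩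
      by_cases hi : i + 1 ≤ x0 + k
      · exact hpairs i h0 hi
      by_cases hi' : i = x0 + k
      · exact Or.inl (hi' ▸ hK)
      · obtain rfl : i = x0 + (k + 1) := by omega
        exact Or.inr (by rwa [add_assoc])

end Crossing

noncomputable def crossingProb (p : ℝ) (x0 y0 : ℤ) (a b : ℕ) : ℝ :=
  probOn p (rectangle x0 y0 a b) (Crossed x0 y0 a b)

section CrossingProb

variable {p : ℝ} {x0 y0 : ℤ} {b : ℕ}

lemma crossingProb_zero : crossingProb p x0 y0 0 b = 0 := by
  have : rectangle x0 y0 0 b = ∅ := by simp [rectangle, rectF]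
  simp [crossingProb, this, probOn, Crossed, colOcc]

lemma crossingProb_one : crossingProb p x0 y0 1 b = 1 - (1 - p) ^ b := by
  rw [crossingProb, probOn_congr fun A _ => crossed_one,
    probOn_of_determinedBy (colF_subset_rectangle le_rfl (by omega))
      (determinedBy_colOcc subset_rfl), probOn_colOcc]

lemma crossingProb_two : crossingProb p x0 y0 2 b = 1 - (1 - p) ^ b := by
  rw [crossingProb, probOn_congr fun A _ => crossed_two,
    probOn_of_determinedBy (colF_subset_rectangle (by omega) (by omega))
      (determinedBy_colOcc subset_rfl), probOn_colOcc]

lemma crossingProb_add_three (k : ℕ) :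
    crossingProb p x0 y0 (k + 3) b =
      (1 - (1 - p) ^ b) * crossingProb p x0 y0 (k + 2) b
        + (1 - (1 - p) ^ b) * (1 - p) ^ b * crossingProb p x0 y0 (k + 1) b := by
  set L := x0 + ((k + 2 : ℕ) : ℤ)
  set M := x0 + ((k + 1 : ℕ) : ℤ)
  have hsplit₁ : rectangle x0 y0 (k + 3) b = rectangle x0 y0 (k + 2) b ∪ colF y0 b L :=
    rectangle_succ (k + 2)
  have hsplit₂ : rectangle x0 y0 (k + 3) b =
      rectangle x0 y0 (k + 1) b ∪ (colF y0 b M ∪ colF y0 b L) := by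
    rw [hsplit₁, rectangle_succ (k + 1), union_assoc]
  have hocc : probOn p (rectangle x0 y0 (k + 3) b)
      (fun A => Crossed x0 y0 (k + 2) b A ∧ colOcc A y0 b L) =
        crossingProb p x0 y0 (k + 2) b * (1 - (1 - p) ^ b) := by
    rw [hsplit₁, probOn_and_of_disjoint (disjoint_rectangle_colF le_rfl)
      (determinedBy_crossed (by omega)) (determinedBy_colOcc subset_rfl), probOn_colOcc]
    rfl
  have hgap : probOn p (rectangle x0 y0 (k + 3) b)
      (fun A => Crossed x0 y0 (k + 1) b A ∧ ¬ colOcc A y0 b M ∧ colOcc A y0 b L) =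
        crossingProb p x0 y0 (k + 1) b * ((1 - p) ^ b * (1 - (1 - p) ^ b)) := by
    rw [hsplit₂, probOn_and_of_disjoint ?_ (determinedBy_crossed (by omega))
      ((determinedBy_colOcc subset_union_left).not.and (determinedBy_colOcc subset_union_right)),
      probOn_and_of_disjoint (disjoint_colF (by omega)) (determinedBy_colOcc subset_rfl).not
        (determinedBy_colOcc subset_rfl), probOn_not_colOcc, probOn_colOcc]
    · rfl
    · exact disjoint_union_right.mpr
        ⟨disjoint_rectangle_colF le_rfl, disjoint_rectangle_colF (by omega)⟩
  rw [crossingProb, probOn_congr fun A _ => crossed_add_three k, probOn_or_of_disjoint ?_, hocc,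
    hgap]
  · ring
  · rintro A ⟨⟨⟨_, hM⟩, _⟩, _, hM', _⟩
    refine hM' (by convert hM using 2; push_cast; ring)

end CrossingProb

lemma le_pow_of_two_step_recurrence {c : ℕ → ℝ} {u v β : ℝ} (hu : 0 ≤ u) (hv : 0 ≤ v)
    (hβ : β ^ 2 = u * β + v) (h1 : c 1 ≤ β) (h2 : c 2 ≤ β ^ 2)
    (hrec : ∀ k, c (k + 3) = u * c (k + 2) + v * c (k + 1)) (n : ℕ) :
    c (n + 1) ≤ β ^ (n + 1) := by
  suffices ∀ n, c (n + 1) ≤ β ^ (n + 1) ∧ c (n + 2) ≤ β ^ (n + 2) from (this n).1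
  intro n
  induction n with
  | zero => exact ⟨by simpa using h1, h2⟩
  | succ n ih =>
    refine ⟨ih.2, ?_⟩
    calc c (n + 3) = u * c (n + 2) + v * c (n + 1) := hrec n
      _ ≤ u * β ^ (n + 2) + v * β ^ (n + 1) := by gcongr; exacts [ih.2, ih.1]
      _ = β ^ (n + 1) * β ^ 2 := by rw [hβ]; ring
      _ = β ^ (n + 3) := by ring

section Beta

variable {u : ℝ}

lemma beta_nonneg (hu : 0 ≤ u) : 0 ≤ beta u := by
  unfold beta
  positivity

lemma beta_sq (hu : 0 ≤ u * (4 - 3 * u)) : beta u ^ 2 = u * beta u + u * (1 - u) := by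
  unfold beta
  have := Real.sq_sqrt hu
  nlinarith

lemma le_beta (hu0 : 0 ≤ u) (hu1 : u ≤ 1) : u ≤ beta u := by
  unfold beta
  have : u ≤ Real.sqrt (u * (4 - 3 * u)) :=
    Real.le_sqrt_of_sq_le (by nlinarith)
  linarith

end Beta

lemma crossingProb_le_beta_pow {p : ℝ} (hp0 : 0 ≤ p) (hp1 : p ≤ 1) (x0 y0 : ℤ) (a b : ℕ) :
    crossingProb p x0 y0 a b ≤ beta (1 - (1 - p) ^ b) ^ a := by
  set u := 1 - (1 - p) ^ b
  have hε0 : 0 ≤ (1 - p) ^ b := pow_nonneg (by linarith) b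
  have hu0 : 0 ≤ u := sub_nonneg.mpr (pow_le_one₀ (by linarith) (by linarith))
  have hu1 : u ≤ 1 := by linarith
  have huβ : u ≤ beta u := le_beta hu0 hu1
  have hβ : beta u ^ 2 = u * beta u + u * (1 - p) ^ b := by
    rw [beta_sq (by nlinarith)]
    ring
  rcases a with _ | n
  · simp [crossingProb_zero]
  refine le_pow_of_two_step_recurrence (c := fun n => crossingProb p x0 y0 n b) hu0
    (by positivity) hβ ?_ ?_ (fun k => ?_) n
  · simpa only [crossingProb_one, pow_one] using huβ
  · simp only [crossingProb_two, hβ]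
    nlinarith [mul_le_mul_of_nonneg_left huβ hu0]
  · exact crossingProb_add_three k

lemma pow_le_exp_mul_log {x : ℝ} (hx : 0 ≤ x) (n : ℕ) :
    x ^ n ≤ Real.exp (n * Real.log x) := by
  rcases hx.eq_or_lt with rfl | hx
  · rcases n with _ | n <;> simp
  · rw [← Real.log_pow, Real.exp_log (pow_pos hx n)]

theorem stmt14_general (p : ℝ) (hp0 : 0 < p) (hp1 : p < 1) (a b : ℕ) (x0 y0 : ℤ) :
    probOn p (rectF x0 y0 (x0 + a - 1) (y0 + b - 1)) (Crossed x0 y0 a b)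
      ≤ Real.exp (-(a : ℝ) * gfun ((b : ℝ) * (-Real.log (1 - p)))) := by
  have hexp : Real.exp (-((b : ℝ) * -Real.log (1 - p))) = (1 - p) ^ b := by
    rw [mul_neg, neg_neg, Real.exp_nat_mul, Real.exp_log (by linarith)]
  have hu : 0 ≤ 1 - (1 - p) ^ b := sub_nonneg.mpr (pow_le_one₀ (by linarith) (by linarith))
  calc probOn p (rectF x0 y0 (x0 + a - 1) (y0 + b - 1)) (Crossed x0 y0 a b)
      = crossingProb p x0 y0 a b := rfl
    _ ≤ beta (1 - (1 - p) ^ b) ^ a := crossingProb_le_beta_pow hp0.le hp1.le x0 y0 a b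
    _ ≤ Real.exp (a * Real.log (beta (1 - (1 - p) ^ b))) :=
      pow_le_exp_mul_log (beta_nonneg hu) a
    _ = Real.exp (-(a : ℝ) * gfun ((b : ℝ) * (-Real.log (1 - p)))) := by
      rw [gfun, hexp, neg_mul_neg]

/-- The probability that an `a × b` rectangle is crossed from left to right is at
most `e^{-a g(bq)}`, where `q = -log(1-p)`. -/
theorem stmt14 (p : ℝ) (hp0 : 0 < p) (hp1 : p < 1) (a b : ℕ) (ha : 0 < a)
    (hb : 0 < b) (x0 y0 : ℤ) :
    probOn p (rectF x0 y0 (x0 + a - 1) (y0 + b - 1)) (Crossed x0 y0 a b)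
      ≤ Real.exp (-(a : ℝ) * gfun ((b : ℝ) * (-Real.log (1 - p)))) :=
  stmt14_general p hp0 hp1 a b x0 y0
end
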